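/- arXiv:2503.17749 — 3 statements merged into one kernel-verified Lean document; each statement's English description precedes it below -/
import Mathlib

section
/- Let K be an analytic field and let {F_i}_{i∈I} be a nonempty family of closed subfields of K that is filtered by inclusion (any two members are contained in a common member). Assume that the family admits a strictly increasing cofinal sequence F_{i_0} ⊊ F_{i_1} ⊊ F_{i_2} ⊊ ⋯ (so I has countable cofinality and no member contains all others), and that at least one F_i is not trivially normed (contains a nonzero element of norm ≠ 1). Then the union F = ⋃_{i∈I} F_i is not complete; equivalently, F is a non-closed subfield of K. -/
/-- if a nonempty filtered family of closed subfields of an analytic field `K`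
admits a strictly increasing cofinal sequence and some member is not trivially normed,
then the union of the family is not closed (equivalently, not complete). -/
theorem union_not_closed_of_countable_cofinality
    {K : Type*} [NormedField K] [CompleteSpace K] [IsUltrametricDist K]
    {I : Type*} [Nonempty I] (F : I → Subfield K)
    (hclosed : ∀ i, IsClosed (F i : Set K))
    (hfiltered : ∀ i j, ∃ m, F i ≤ F m ∧ F j ≤ F m)
    (seq : ℕ → I)
    (hmono : ∀ n, F (seq n) < F (seq (n + 1)))
    (hcofinal : ∀ i, ∃ n, F i ≤ F (seq n))
    (hnontriv : ∃ i, ∃ x ∈ F i, x ≠ 0 ∧ ‖x‖ ≠ 1) :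
    ¬ IsClosed (⋃ i, (F i : Set K)) := by
  intro hS'
  classical
  set G : ℕ → Subfield K := fun n => F (seq n) with hG
  have hGmono : Monotone G := monotone_nat_of_le_succ fun n => (hmono n).le
  have hUnion : (⋃ i, (F i : Set K)) = ⋃ n, (G n : Set K) := by
    apply Set.Subset.antisymm
    · rintro x hx
      simp only [Set.mem_iUnion] at hx ⊢
      obtain ⟨i, hi⟩ := hx
      obtain ⟨n, hn⟩ := hcofinal i
      exact ⟨n, hn hi⟩
    · rintro x hx
      simp only [Set.mem_iUnion] at hx ⊢
      obtain ⟨n, hn⟩ := hx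
      exact ⟨seq n, hn⟩
  set S : Set K := ⋃ n, (G n : Set K) with hSdef
  rw [hUnion] at hS'
  have hcs : CompleteSpace S := hS'.completeSpace_coe
  have hmemS : ∀ {y : K}, y ∈ S ↔ ∃ n, y ∈ G n := by
    intro y; simp [hSdef]
  -- Baire category on the complete space S
  have hne : Nonempty S := ⟨⟨0, hmemS.mpr ⟨0, (G 0).zero_mem⟩⟩⟩
  have hT : ∀ n : ℕ, IsClosed {x : S | (x : K) ∈ G n} := fun n =>
    (hclosed (seq n)).preimage continuous_subtype_val
  have hTU : ⋃ n, {x : S | (x : K) ∈ G n} = Set.univ := by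
    ext x
    simp only [Set.mem_iUnion, Set.mem_univ, iff_true, Set.mem_setOf_eq]
    exact hmemS.mp x.2
  obtain ⟨n, x, hx⟩ := nonempty_interior_of_iUnion_of_closed hT hTU
  obtain ⟨ε, hε, hball⟩ := Metric.isOpen_iff.mp isOpen_interior x hx
  have hxn : (x : K) ∈ G n := interior_subset (s := {x : S | (x : K) ∈ G n}) hx
  -- every element of S of norm < ε lies in G n
  have hsmall : ∀ y : K, y ∈ S → ‖y‖ < ε → y ∈ G n := by
    intro y hyS hy
    have hxyS : (x : K) + y ∈ S := by
      obtain ⟨a, ha⟩ := hmemS.mp x.2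
      obtain ⟨b, hb⟩ := hmemS.mp hyS
      exact hmemS.mpr ⟨max a b, (G _).add_mem (hGmono (le_max_left a b) ha)
        (hGmono (le_max_right a b) hb)⟩
    have hmem : (⟨(x : K) + y, hxyS⟩ : S) ∈ Metric.ball x ε := by
      simp only [Metric.mem_ball, Subtype.dist_eq, dist_eq_norm]
      simpa using hy
    have h1 : (x : K) + y ∈ G n := interior_subset (s := {x : S | (x : K) ∈ G n}) (hball hmem)
    have h2 := (G n).add_mem h1 ((G n).neg_mem hxn)
    simpa using h2
  -- a nonzero element of norm < 1
  obtain ⟨i, x0, hx0F, hx0ne, hx0norm⟩ := hnontriv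
  obtain ⟨m, hm⟩ := hcofinal i
  have hx0m : x0 ∈ G m := hm hx0F
  obtain ⟨z, hz, hzne, hznorm⟩ : ∃ z, z ∈ G m ∧ z ≠ 0 ∧ ‖z‖ < 1 := by
    rcases lt_or_gt_of_ne hx0norm with h | h
    · exact ⟨x0, hx0m, hx0ne, h⟩
    · refine ⟨x0⁻¹, (G m).inv_mem hx0m, inv_ne_zero hx0ne, ?_⟩
      rw [norm_inv]
      exact inv_lt_one_of_one_lt₀ h
  set N := max n m with hN
  have hzN : z ∈ G N := hGmono (le_max_right n m) hz
  obtain ⟨w, hwN1, hwN⟩ := SetLike.exists_of_lt (hmono N)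
  -- w * z ^ k is eventually small
  have hlim : Filter.Tendsto (fun k => ‖w‖ * ‖z‖ ^ k) Filter.atTop (nhds 0) := by
    have := (tendsto_pow_atTop_nhds_zero_of_lt_one (norm_nonneg z) hznorm).const_mul ‖w‖
    simpa using this
  obtain ⟨k, hk⟩ := (hlim.eventually (gt_mem_nhds hε)).exists
  have hwzS : w * z ^ k ∈ S :=
    hmemS.mpr ⟨N + 1, (G (N + 1)).mul_mem hwN1 ((G (N + 1)).pow_mem ((hmono N).le hzN) k)⟩
  have hwznorm : ‖w * z ^ k‖ < ε := by
    rw [norm_mul, norm_pow]; exact hk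
  have hwzN : w * z ^ k ∈ G N := hGmono (le_max_left n m) (hsmall _ hwzS hwznorm)
  have : w ∈ G N := by
    have hzk : z ^ k ≠ 0 := pow_ne_zero k hzne
    have := (G N).mul_mem hwzN ((G N).inv_mem ((G N).pow_mem hzN k))
    rwa [mul_assoc, mul_inv_cancel₀ hzk, mul_one] at this
  exact hwN this
end

section
/- Let K be an analytic field and let {F_i}_{i∈I} be a nonempty family of closed subfields of K that is filtered by inclusion. Then the union F = ⋃_{i∈I} F_i is complete (equivalently, closed in K) in each of the following cases: (a) the family has a greatest member; (b) every F_i is trivially normed; (c) every countable subfamily is bounded above by a member of the family, i.e., for every countable J ⊆ I there is i ∈ I with F_j ⊆ F_i for all j ∈ J (for example, the family is a chain of uncountable cofinality). -/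
/-- the union of a nonempty filtered family of closed subfields of an analytic
field `K` is closed (equivalently, complete) if (a) the family has a greatest member, or
(b) every member is trivially normed, or (c) every countable subfamily is bounded above by
a member of the family. -/
theorem union_isClosed_of_bounded_or_trivial
    {K : Type*} [NormedField K] [CompleteSpace K] [IsUltrametricDist K]
    {I : Type*} [Nonempty I] (F : I → Subfield K)
    (hclosed : ∀ i, IsClosed (F i : Set K))
    (hfiltered : ∀ i j, ∃ m, F i ≤ F m ∧ F j ≤ F m)
    (hcase :
      (∃ i₀, ∀ i, F i ≤ F i₀) ∨
      (∀ i, ∀ x ∈ F i, x ≠ 0 → ‖x‖ = 1) ∨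
      (∀ J : Set I, J.Countable → ∃ i, ∀ j ∈ J, F j ≤ F i)) :
    IsClosed (⋃ i, (F i : Set K)) := by
  rcases hcase with ⟨i₀, hi₀⟩ | htriv | hcount
  · have h : (⋃ i, (F i : Set K)) = F i₀ :=
      Set.Subset.antisymm (Set.iUnion_subset fun i => hi₀ i)
        (Set.subset_iUnion (fun i => (F i : Set K)) i₀)
    rw [h]; exact hclosed i₀
  · apply IsSeqClosed.isClosed
    intro u p hu hup
    have hsep : ∀ m n, u m ≠ u n → 1 ≤ dist (u m) (u n) := by
      intro m n hne
      obtain ⟨im, hm⟩ := Set.mem_iUnion.1 (hu m)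
      obtain ⟨iN, hn⟩ := Set.mem_iUnion.1 (hu n)
      obtain ⟨k, hk1, hk2⟩ := hfiltered im iN
      have hmem : u m - u n ∈ F k := sub_mem (hk1 hm) (hk2 hn)
      have h1 : ‖u m - u n‖ = 1 := htriv k _ hmem (sub_ne_zero.2 hne)
      rw [dist_eq_norm, h1]
    obtain ⟨N, hN⟩ := Metric.cauchySeq_iff.1 hup.cauchySeq 1 one_pos
    have heq : ∀ n ≥ N, u n = u N := by
      intro n hn
      by_contra hne
      exact absurd (hN n hn N le_rfl) (not_lt.2 (hsep n N hne))
    have hconst : Filter.Tendsto u Filter.atTop (nhds (u N)) := by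
      apply Filter.Tendsto.congr' _ tendsto_const_nhds
      filter_upwards [Filter.eventually_ge_atTop N] with n hn
      exact (heq n hn).symm
    have hpe := tendsto_nhds_unique hup hconst
    rw [hpe]; exact hu N
  · apply IsSeqClosed.isClosed
    intro u p hu hup
    choose i hi using fun n => Set.mem_iUnion.1 (hu n)
    obtain ⟨j, hj⟩ := hcount (Set.range i) (Set.countable_range i)
    have hmem : ∀ n, u n ∈ F j := fun n => hj (i n) (Set.mem_range_self n) (hi n)
    have hp : p ∈ F j := (hclosed j).isSeqClosed hmem hup
    exact Set.mem_iUnion.2 ⟨j, hp⟩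
end

section
/- Let k be a complete algebraically closed analytic field, L an analytic field containing k as a closed subfield, and x ∈ L \ k an element such that L is the topological closure of the subfield k(x) and the extension L/k is immediate. Then the polynomial ring k[x] is dense in L; moreover, the ring of integers L° = {y ∈ L : ‖y‖ ≤ 1} is the topological closure of the union over a ∈ k of the subrings k°[(x − a)/π_a], where for each a ∈ k, π_a is any element of k with ‖π_a‖ = ‖x − a‖ (such elements exist since L/k is immediate) and k° = {c ∈ k : ‖c‖ ≤ 1}. -/
/-- An element `x` of `Ω` is algebraic over the subfield `F` of `Ω`. -/
def IsAlgOver {Ω : Type*} [Field Ω] (F : Subfield Ω) (x : Ω) : Prop :=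
  ∃ p : Polynomial Ω, p ≠ 0 ∧ (∀ n, p.coeff n ∈ F) ∧ Polynomial.eval x p = 0

/-- `cl K S`: the completed algebraic closure of `K(S)` inside the ambient field `Ω`;
topological closure of the set of elements algebraic over the subfield generated by `K` and `S`. -/
noncomputable def cl {Ω : Type*} [Field Ω] [TopologicalSpace Ω] (K : Subfield Ω) (S : Set Ω) : Set Ω :=
  closure {x : Ω | IsAlgOver (Subfield.closure ((K : Set Ω) ∪ S)) x}

/-- The subfield `F` of `Ω` is algebraically closed (as a field). -/
def IsAlgClosedSub {Ω : Type*} [Field Ω] (F : Subfield Ω) : Prop :=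
  ∀ x : Ω, IsAlgOver F x → x ∈ F

/-- `S` is topologically-algebraically independent over `K`. -/
def TAIndep {Ω : Type*} [Field Ω] [TopologicalSpace Ω] (K : Subfield Ω) (S : Set Ω) : Prop :=
  ∀ S' : Set Ω, S' ⊂ S → cl K S' ⊂ cl K S

/-- `Topdeg K F`: the least cardinality of a t.a. generating subset of `F` over `K`. -/
noncomputable def Topdeg {Ω : Type*} [Field Ω] [TopologicalSpace Ω] (K : Subfield Ω) (F : Set Ω) :
    Cardinal :=
  sInf {c : Cardinal | ∃ S : Set Ω, S ⊆ F ∧ cl K S = cl K F ∧ Cardinal.mk S = c}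

/-- `topdeg K F`: the supremum of cardinalities of subsets of `F` t.a. independent over `K`. -/
noncomputable def topdeg {Ω : Type*} [Field Ω] [TopologicalSpace Ω] (K : Subfield Ω) (F : Set Ω) :
    Cardinal :=
  sSup {c : Cardinal | ∃ S : Set Ω, S ⊆ F ∧ TAIndep K S ∧ Cardinal.mk S = c}

/-- The distance from `t` to the subset `F`. -/
noncomputable def rdist {Ω : Type*} [NormedField Ω] (F : Set Ω) (t : Ω) : ℝ :=
  sInf ((fun c => ‖t - c‖) '' F)

/-- The extension `Ω / K` is immediate. -/
def IsImmediate {Ω : Type*} [NormedField Ω] (K : Subfield Ω) : Prop :=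
  {r : ℝ | ∃ x : Ω, x ≠ 0 ∧ ‖x‖ = r} = {r : ℝ | ∃ x ∈ K, x ≠ 0 ∧ ‖x‖ = r} ∧
  ∀ x : Ω, ‖x‖ = 1 → ∃ c ∈ K, ‖x - c‖ < 1

/-! Since `k` is algebraically closed, every element of `k[x]` is `c ∏ (x - ρᵢ)` with `c, ρᵢ ∈ k`.
Immediateness says that no `a ∈ k` is a best approximation of `x`: some `b ∈ k` has
`‖(x - a) - b‖ < ‖x - a‖`. Then `x - a = b (1 - t)` with `‖t‖ < 1`, and the geometric series puts
`(x - a)⁻¹`, hence the inverse of every nonzero element of `k[x]`, into the closure of `k[x]`; that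
closure therefore contains `k(x)`, which is dense.

For the integers, write `z = c ∏ (x - ρᵢ)` and pick `a ∈ k` closer to `x` than every `ρᵢ`. With
`u = (x - a) / π_a`, each factor is `x - ρᵢ = (a - ρᵢ) (1 + (π_a / (a - ρᵢ)) u)`, where the second
factor lies in `k°[u]` and has norm one. So `c ∏ (a - ρᵢ) ∈ k` has norm `‖z‖`, and `z ∈ k°[u]`
as soon as `‖z‖ ≤ 1`. As the unit ball is open, it is the closure of its intersection with the
dense `k[x]`. -/

open Polynomial IsUltrametricDist

section Field

variable {K : Type*} [Field K]

theorem closure_subfieldClosure_subset [TopologicalSpace K] [IsSemitopologicalRing K]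
    {R : Subring K} (h : ∀ z ∈ R, z⁻¹ ∈ closure (R : Set K)) :
    closure (Subfield.closure (R : Set K) : Set K) ⊆ closure R := by
  refine closure_minimal (fun y hy => ?_) isClosed_closure
  obtain ⟨a, ha, b, hb, rfl⟩ := Subfield.mem_closure_iff.1 hy
  rw [Subring.closure_eq] at ha hb
  rw [div_eq_mul_inv]
  exact R.topologicalClosure.mul_mem (subset_closure ha) (h b hb)

theorem setOf_eval_eq_adjoin (k : Subfield K) (x : K) :
    {y : K | ∃ P : K[X], (∀ n, P.coeff n ∈ k) ∧ y = P.eval x} = Algebra.adjoin k {x} := by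
  ext y
  rw [Set.mem_ofPred_eq, SetLike.mem_coe, Algebra.adjoin_singleton_eq_range_aeval]
  constructor
  · rintro ⟨P, hP, rfl⟩
    obtain ⟨q, rfl⟩ := mem_lifts P |>.1 <|
      (lifts_iff_coeff_lifts (f := algebraMap k K) P).2 fun n => ⟨⟨_, hP n⟩, rfl⟩
    exact ⟨q, by simp [eval_map_algebraMap]⟩
  · rintro ⟨q, rfl⟩
    refine ⟨q.map (algebraMap k K), fun n => ?_, by simp [eval_map_algebraMap]⟩
    rw [coeff_map]
    exact (q.coeff n).2

variable {k : Subfield K}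

theorem exists_eq_mul_prod_sub_of_mem_adjoin [IsAlgClosed k] {x z : K}
    (hz : z ∈ Algebra.adjoin k {x}) :
    ∃ c ∈ k, ∃ m : Multiset K, (∀ ρ ∈ m, ρ ∈ k) ∧ z = c * (m.map (x - ·)).prod := by
  rw [Algebra.adjoin_singleton_eq_range_aeval] at hz
  obtain ⟨q, rfl⟩ := hz
  have hsplit := (IsAlgClosed.splits q).map (algebraMap k K)
  refine ⟨_, q.leadingCoeff.2, q.roots.map (algebraMap k K), fun ρ hρ => ?_, ?_⟩
  · obtain ⟨r, -, rfl⟩ := Multiset.mem_map.1 hρ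
    exact r.2
  rw [AlgHom.toRingHom_eq_coe, RingHom.coe_coe, hsplit.aeval_eq_prod_aroots, aroots_def,
    (IsAlgClosed.splits q).roots_map]
  rfl

end Field

theorem norm_eq_of_norm_sub_lt {E : Type*} [SeminormedAddGroup E] [IsUltrametricDist E] {y z : E}
    (h : ‖y - z‖ < ‖y‖) : ‖z‖ = ‖y‖ := by
  have := norm_eq_of_add_norm_lt_max (x := y) (y := -z)
    (by rw [← sub_eq_add_neg]; exact h.trans_le (le_max_left _ _))
  rw [norm_neg] at this
  exact this.symm

def closedUnitBallSubring (R : Type*) [NormedRing R] [NormOneClass R] [IsUltrametricDist R] :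
    Subring R where
  carrier := {y | ‖y‖ ≤ 1}
  mul_mem' {a b} ha hb := (norm_mul_le a b).trans (mul_le_one₀ ha (norm_nonneg b) hb)
  one_mem' := norm_one.le
  add_mem' {a b} ha hb := (norm_add_le_max a b).trans (max_le ha hb)
  zero_mem' := norm_zero.trans_le zero_le_one
  neg_mem' {a} ha := (norm_neg a).trans_le ha

section NormedField

variable {L : Type*} [NormedField L]

theorem one_sub_inv_mem_closure {R : Subring L} {t : L} (ht : t ∈ R) (h : ‖t‖ < 1) :
    (1 - t)⁻¹ ∈ closure (R : Set L) :=
  mem_closure_of_tendsto (hasSum_geometric_of_norm_lt_one h).tendsto_sum_nat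
    (Filter.Eventually.of_forall fun _ => R.sum_mem fun j _ => R.pow_mem ht j)

theorem inv_mem_closure_of_norm_sub_lt {R : Subring L} {w s : L} (hw : w ∈ R) (hs : s⁻¹ ∈ R)
    (h : ‖w - s‖ < ‖s‖) : w⁻¹ ∈ closure (R : Set L) := by
  have hs0 : s ≠ 0 := norm_pos_iff.1 ((norm_nonneg _).trans_lt h)
  have hsmall : ‖1 - w * s⁻¹‖ < 1 := by
    rw [← mul_inv_cancel₀ hs0, ← sub_mul, norm_mul, norm_inv, norm_sub_rev, ← div_eq_mul_inv]
    exact (div_lt_one (norm_pos_iff.2 hs0)).2 h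
  have hinv : w⁻¹ = s⁻¹ * (1 - (1 - w * s⁻¹))⁻¹ := by
    rw [sub_sub_cancel, mul_inv, inv_inv, mul_comm w⁻¹ s, ← mul_assoc, inv_mul_cancel₀ hs0,
      one_mul]
  rw [hinv]
  exact R.topologicalClosure.mul_mem (subset_closure hs)
    (one_sub_inv_mem_closure (R.sub_mem R.one_mem (R.mul_mem hw hs)) hsmall)

variable {k : Subfield L}

theorem IsImmediate.exists_norm_sub_lt (himm : IsImmediate k) {y : L} (hy : y ≠ 0) :
    ∃ c ∈ k, ‖y - c‖ < ‖y‖ := by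
  obtain ⟨p, hpk, hp0, hp⟩ : ‖y‖ ∈ {r : ℝ | ∃ p ∈ k, p ≠ 0 ∧ ‖p‖ = r} := himm.1 ▸ ⟨y, hy, rfl⟩
  obtain ⟨c, hck, hc⟩ := himm.2 (y / p) (by rw [norm_div, hp, div_self (norm_ne_zero_iff.2 hy)])
  refine ⟨p * c, k.mul_mem hpk hck, ?_⟩
  rw [show y - p * c = p * (y / p - c) by field_simp, norm_mul, hp]
  exact mul_lt_of_lt_one_right (norm_pos_iff.2 hy) hc

theorem IsImmediate.exists_forall_norm_sub_lt (himm : IsImmediate k) {x : L} (hx : x ∉ k)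
    (s : Finset L) (hs : ∀ ρ ∈ s, ρ ∈ k) : ∃ a ∈ k, ∀ ρ ∈ s, ‖x - a‖ < ‖x - ρ‖ := by
  classical
  obtain ⟨ρ₀, hρ₀, hmin⟩ :=
    (insert 0 s).exists_min_image (fun ρ => ‖x - ρ‖) (Finset.insert_nonempty 0 s)
  have hρ₀k : ρ₀ ∈ k := by
    rcases Finset.mem_insert.1 hρ₀ with rfl | h
    exacts [k.zero_mem, hs _ h]
  obtain ⟨c, hck, hc⟩ :=
    himm.exists_norm_sub_lt (sub_ne_zero.2 (ne_of_mem_of_not_mem hρ₀k hx).symm)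
  refine ⟨ρ₀ + c, k.add_mem hρ₀k hck, fun ρ hρ => ?_⟩
  rw [← sub_sub]
  exact hc.trans_le (hmin ρ (Finset.mem_insert_of_mem hρ))

end NormedField

section Ultrametric

variable {L : Type*} [NormedField L] [IsUltrametricDist L] {k : Subfield L} {x : L}

theorem inv_sub_mem_closure_adjoin (himm : IsImmediate k) (hx : x ∉ k) {a : L} (ha : a ∈ k) :
    (x - a)⁻¹ ∈ closure (Algebra.adjoin k {x} : Set L) := by
  obtain ⟨c, hck, hc⟩ :=
    himm.exists_norm_sub_lt (sub_ne_zero.2 (ne_of_mem_of_not_mem ha hx).symm)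
  exact inv_mem_closure_of_norm_sub_lt (R := (Algebra.adjoin k {x}).toSubring)
    (sub_mem (Algebra.self_mem_adjoin_singleton k x) (Subalgebra.algebraMap_mem _ (⟨a, ha⟩ : k)))
    (Subalgebra.algebraMap_mem _ (⟨c⁻¹, k.inv_mem hck⟩ : k))
    (by rwa [norm_eq_of_norm_sub_lt hc])

theorem inv_mem_closure_adjoin [IsAlgClosed k] (himm : IsImmediate k) (hx : x ∉ k) {z : L}
    (hz : z ∈ Algebra.adjoin k {x}) : z⁻¹ ∈ closure (Algebra.adjoin k {x} : Set L) := by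
  obtain ⟨c, hc, m, hm, rfl⟩ := exists_eq_mul_prod_sub_of_mem_adjoin hz
  rw [mul_inv, ← Multiset.prod_map_inv]
  refine (Algebra.adjoin k {x}).toSubring.topologicalClosure.mul_mem
    (subset_closure (Subalgebra.algebraMap_mem _ (⟨c⁻¹, k.inv_mem hc⟩ : k))) ?_
  refine Subring.multiset_prod_mem _ _ fun y hy => ?_
  obtain ⟨ρ, hρ, rfl⟩ := Multiset.mem_map.1 hy
  exact inv_sub_mem_closure_adjoin himm hx (hm ρ hρ)

theorem dense_adjoin_of_isImmediate [IsAlgClosed k] (himm : IsImmediate k) (hx : x ∉ k)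
    (hgen : closure (Subfield.closure ((k : Set L) ∪ {x}) : Set L) = Set.univ) :
    Dense (Algebra.adjoin k {x} : Set L) := by
  have hgen_le : (k : Set L) ∪ {x} ⊆ Algebra.adjoin k {x} :=
    Set.union_subset (fun a ha => Subalgebra.algebraMap_mem _ (⟨a, ha⟩ : k))
      (Set.singleton_subset_iff.2 (Algebra.self_mem_adjoin_singleton k x))
  rw [dense_iff_closure_eq, ← Set.univ_subset_iff, ← hgen]
  exact (closure_mono (Subfield.closure_mono hgen_le)).trans
    (closure_subfieldClosure_subset (R := (Algebra.adjoin k {x}).toSubring)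
      fun z hz => inv_mem_closure_adjoin himm hx hz)

/-- The ring `k°[u]`. -/
def integersAdjoin (k : Subfield L) (u : L) : Subring L :=
  Subring.closure ({c : L | c ∈ k ∧ ‖c‖ ≤ 1} ∪ {u})

theorem integersAdjoin_le_closedUnitBallSubring {u : L} (hu : ‖u‖ ≤ 1) :
    integersAdjoin k u ≤ closedUnitBallSubring L :=
  Subring.closure_le.2 (Set.union_subset (fun _ hc => hc.2) (Set.singleton_subset_iff.2 hu))

theorem sub_mem_sup_of_norm_sub_lt (hx : x ∉ k) {a π ρ : L} (ha : a ∈ k) (hπk : π ∈ k)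
    (hπ : ‖π‖ = ‖x - a‖) (hρ : ρ ∈ k) (hlt : ‖x - a‖ < ‖x - ρ‖) :
    x - ρ ∈ k.toSubmonoid ⊔
      ((integersAdjoin k ((x - a) / π)).toSubmonoid ⊓ Submonoid.unitSphere L) := by
  have hxa : ‖x - a‖ ≠ 0 :=
    norm_ne_zero_iff.2 (sub_ne_zero.2 (ne_of_mem_of_not_mem ha hx).symm)
  have hπ0 : π ≠ 0 := norm_ne_zero_iff.1 (hπ ▸ hxa)
  have hd : ‖a - ρ‖ = ‖x - ρ‖ := norm_eq_of_norm_sub_lt (by rwa [sub_sub_sub_cancel_right])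
  have hd0 : a - ρ ≠ 0 := norm_pos_iff.1 (hd ▸ (norm_nonneg _).trans_lt hlt)
  have hcoeff : ‖π / (a - ρ)‖ < 1 := by
    rw [norm_div, hπ, hd]
    exact (div_lt_one ((norm_nonneg _).trans_lt hlt)).2 hlt
  have hu : ‖(x - a) / π‖ = 1 := by
    rw [norm_div, hπ, div_self hxa]
  set v := 1 + π / (a - ρ) * ((x - a) / π)
  have hv : ‖v‖ = 1 := by
    refine (norm_eq_of_norm_sub_lt ?_).trans norm_one
    rwa [sub_add_cancel_left, norm_neg, norm_mul, hu, mul_one, norm_one]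
  have hvO : v ∈ integersAdjoin k ((x - a) / π) :=
    add_mem (one_mem _) (mul_mem (Subring.subset_closure (Or.inl
      ⟨k.div_mem hπk (k.sub_mem ha hρ), hcoeff.le⟩)) (Subring.subset_closure (Or.inr rfl)))
  refine Submonoid.mem_sup.2
    ⟨a - ρ, k.sub_mem ha hρ, v, ⟨hvO, mem_sphere_zero_iff_norm.2 hv⟩, ?_⟩
  simp only [v]
  field_simp
  ring

theorem exists_mem_integersAdjoin_of_mem_adjoin [IsAlgClosed k] (himm : IsImmediate k)
    (hx : x ∉ k) {z : L} (hz : z ∈ Algebra.adjoin k {x}) (hz1 : ‖z‖ ≤ 1) :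
    ∃ a ∈ k, ∀ π ∈ k, ‖π‖ = ‖x - a‖ → z ∈ integersAdjoin k ((x - a) / π) := by
  classical
  obtain ⟨c, hc, m, hm, rfl⟩ := exists_eq_mul_prod_sub_of_mem_adjoin hz
  obtain ⟨a, ha, hlt⟩ := himm.exists_forall_norm_sub_lt hx m.toFinset
    (fun ρ hρ => hm ρ (Multiset.mem_toFinset.1 hρ))
  refine ⟨a, ha, fun π hπk hπ => ?_⟩
  have hfactor : c * (m.map (x - ·)).prod ∈ k.toSubmonoid ⊔
      ((integersAdjoin k ((x - a) / π)).toSubmonoid ⊓ Submonoid.unitSphere L) := by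
    refine mul_mem (le_sup_left (a := k.toSubmonoid) hc) (multiset_prod_mem _ fun y hy => ?_)
    obtain ⟨ρ, hρ, rfl⟩ := Multiset.mem_map.1 hy
    exact sub_mem_sup_of_norm_sub_lt hx ha hπk hπ (hm ρ hρ)
      (hlt ρ (Multiset.mem_toFinset.2 hρ))
  obtain ⟨d, hd, v, ⟨hvO, hv⟩, hdv⟩ := Submonoid.mem_sup.1 hfactor
  rw [← hdv, norm_mul, mem_sphere_zero_iff_norm.1 hv, mul_one] at hz1
  rw [← hdv]
  exact mul_mem (Subring.subset_closure (Or.inl ⟨hd, hz1⟩)) hvO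

end Ultrametric

theorem dense_polynomials_of_immediate_general
    {L : Type*} [NormedField L] [IsUltrametricDist L]
    (k : Subfield L) (hkac : IsAlgClosed k)
    (x : L) (hx : x ∉ k)
    (hgen : closure ((Subfield.closure ((k : Set L) ∪ {x}) : Set L)) = (Set.univ : Set L))
    (himm : IsImmediate k) :
    Dense {y : L | ∃ P : Polynomial L, (∀ n, P.coeff n ∈ k) ∧ y = Polynomial.eval x P} ∧
    ∀ π : L → L, (∀ a ∈ k, π a ∈ k ∧ ‖π a‖ = ‖x - a‖) →
      {y : L | ‖y‖ ≤ 1} =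
        closure (⋃ a ∈ (k : Set L),
          (Subring.closure ({c : L | c ∈ k ∧ ‖c‖ ≤ 1} ∪ {(x - a) / π a}) : Set L)) := by
  have hdense := dense_adjoin_of_isImmediate himm hx hgen
  refine ⟨setOf_eval_eq_adjoin k x ▸ hdense, fun π hπ => subset_antisymm ?_ ?_⟩
  · have hball : {y : L | ‖y‖ ≤ 1} = Metric.closedBall 0 1 := by ext; simp
    rw [hball]
    refine (hdense.open_subset_closure_inter (isOpen_closedBall 0 one_ne_zero)).trans
      (closure_mono fun z ⟨hz1, hz⟩ => ?_)
    obtain ⟨a, ha, hza⟩ :=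
      exists_mem_integersAdjoin_of_mem_adjoin himm hx hz (mem_closedBall_zero_iff.1 hz1)
    exact Set.mem_biUnion ha (hza _ (hπ a ha).1 (hπ a ha).2)
  · refine closure_minimal (Set.iUnion₂_subset fun a ha =>
      integersAdjoin_le_closedUnitBallSubring (k := k) ?_)
      (isClosed_le continuous_norm continuous_const)
    rw [norm_div, (hπ a ha).2]
    exact div_self_le_one _

/-- if `L` is the completion of `k(x)` and `L/k` is immediate (`k` algebraically
closed complete), then `k[x]` is dense in `L`, and the ring of integers `L°` is the closure of
the union over `a ∈ k` of the rings `k°[(x − a)/π_a]` for any choice of `π_a ∈ k` with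
`‖π_a‖ = ‖x − a‖`. -/
theorem dense_polynomials_of_immediate
    {L : Type*} [NormedField L] [CompleteSpace L] [IsUltrametricDist L]
    (k : Subfield L) (hk : IsClosed (k : Set L)) (hkac : IsAlgClosed k)
    (x : L) (hx : x ∉ k)
    (hgen : closure ((Subfield.closure ((k : Set L) ∪ {x}) : Set L)) = (Set.univ : Set L))
    (himm : IsImmediate k) :
    Dense {y : L | ∃ P : Polynomial L, (∀ n, P.coeff n ∈ k) ∧ y = Polynomial.eval x P} ∧
    ∀ π : L → L, (∀ a ∈ k, π a ∈ k ∧ ‖π a‖ = ‖x - a‖) →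
      {y : L | ‖y‖ ≤ 1} =
        closure (⋃ a ∈ (k : Set L),
          (Subring.closure ({c : L | c ∈ k ∧ ‖c‖ ≤ 1} ∪ {(x - a) / π a}) : Set L)) :=
  dense_polynomials_of_immediate_general k hkac x hx hgen himm
end
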